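/- arXiv:1902.06275 — 3 statements merged into one kernel-verified Lean document; each statement's English description precedes it below -/
import Mathlib

section
/- For every n ≥ 1 and every zero-error code C ⊆ S_q(n) for the (ℓ,r)-0-insertion channel, |C| ≤ |C_{q,ℓ,r}(n)|; i.e., C_{q,ℓ,r}(n) is an optimal zero-error code among subsets of S_q(n). -/
namespace ZeroErrorDup

inductive IsOutput (ℓ r : ℕ) : List ℕ → List ℕ → Prop
  | nil : IsOutput ℓ r [] []
  | cons (a : ℕ) (c : ℕ) (hc : c ≤ r) {x y : List ℕ} :
      IsOutput ℓ r x y → IsOutput ℓ r (a :: x) (a :: (List.replicate (c * ℓ) 0 ++ y))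

def Confusable (ℓ r : ℕ) (x y : List ℕ) : Prop :=
  ∃ z, IsOutput ℓ r x z ∧ IsOutput ℓ r y z

def ZeroErrorCode (ℓ r : ℕ) (C : Set (List ℕ)) : Prop :=
  ∀ x ∈ C, ∀ y ∈ C, x ≠ y → ¬ Confusable ℓ r x y

def L (ℓ r i j : ℕ) : ℕ := ((r * i + 1) * (r * ℓ + 1) ^ j - 1) / r - 1

def block (σ u : ℕ) : List ℕ := σ :: List.replicate u 0

def B (q ℓ r : ℕ) : Set (List ℕ) :=
  { b | ∃ σ i j : ℕ, 1 ≤ σ ∧ σ ≤ q - 1 ∧ 1 ≤ i ∧ i ≤ ℓ ∧ b = block σ (L ℓ r i j) }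

def S (q n : ℕ) : Set (List ℕ) :=
  { x | x ≠ [] ∧ x.length ≤ n ∧ (∀ a ∈ x, a < q) ∧ x.headI ≠ 0 }

def C (q ℓ r n : ℕ) : Set (List ℕ) :=
  { x | x ∈ S q n ∧ ∃ bs : List (List ℕ), (∀ b ∈ bs, b ∈ B q ℓ r) ∧ x = bs.flatten }

/-! ### Arithmetic of the levels -/

def Lr (ℓ r i : ℕ) : ℕ → ℕ
  | 0 => i - 1
  | j+1 => Lr ℓ r i j * (r*ℓ+1) + r*ℓ + ℓ

lemma Lr_key (ℓ r i : ℕ) (hi : 1 ≤ i) (j : ℕ) :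
    (r * i + 1) * (r * ℓ + 1) ^ j = r * (Lr ℓ r i j + 1) + 1 := by
  induction j with
  | zero => simp [Lr]; omega
  | succ j ih =>
      have : (r * i + 1) * (r * ℓ + 1) ^ (j+1) = (r * (Lr ℓ r i j + 1) + 1) * (r*ℓ+1) := by
        rw [pow_succ, ← mul_assoc, ih]
      rw [this]; simp [Lr]; ring

lemma Lr_eq_L (ℓ r i : ℕ) (hr : 1 ≤ r) (hi : 1 ≤ i) (j : ℕ) :
    Lr ℓ r i j = L ℓ r i j := by
  unfold L
  rw [Lr_key ℓ r i hi j]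
  have : (r * (Lr ℓ r i j + 1) + 1 - 1) / r = Lr ℓ r i j + 1 := by
    rw [Nat.add_sub_cancel, Nat.mul_div_cancel_left _ (by omega)]
  rw [this]; omega

lemma Lr_mod (ℓ r i j : ℕ) : Lr ℓ r i j % ℓ = (i - 1) % ℓ := by
  induction j with
  | zero => rfl
  | succ j ih =>
      have h : Lr ℓ r i (j+1) = Lr ℓ r i j + (Lr ℓ r i j * r + r + 1) * ℓ := by
        simp [Lr]; ring
      rw [h, Nat.add_mul_mod_self_right, ih]

lemma Lr_lt_succ (ℓ r i j : ℕ) (hℓ : 1 ≤ ℓ) : Lr ℓ r i j < Lr ℓ r i (j+1) := by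
  have : Lr ℓ r i j * 1 ≤ Lr ℓ r i j * (r*ℓ+1) := Nat.mul_le_mul_left _ (by omega)
  simp only [Lr]; omega

lemma Lr_mono (ℓ r i : ℕ) (hℓ : 1 ≤ ℓ) : StrictMono (Lr ℓ r i) :=
  strictMono_nat_of_lt_succ (fun j => Lr_lt_succ ℓ r i j hℓ)

lemma le_Lr (ℓ r i j : ℕ) (hℓ : 1 ≤ ℓ) : j ≤ Lr ℓ r i j := by
  induction j with
  | zero => omega
  | succ j ih => have := Lr_lt_succ ℓ r i j hℓ; omega

def jdx (ℓ r u : ℕ) : ℕ := Nat.findGreatest (fun j => Lr ℓ r (u % ℓ + 1) j ≤ u) u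

def phi (ℓ r u : ℕ) : ℕ := Lr ℓ r (u % ℓ + 1) (jdx ℓ r u)

lemma phi_le (ℓ r u : ℕ) : phi ℓ r u ≤ u := by
  have h0 : Lr ℓ r (u % ℓ + 1) 0 ≤ u := by
    simp only [Lr]
    have := Nat.mod_le u ℓ
    omega
  exact Nat.findGreatest_spec (P := fun j => Lr ℓ r (u % ℓ + 1) j ≤ u) (Nat.zero_le u) h0

lemma lt_Lr_succ_jdx (ℓ r u : ℕ) (hℓ : 1 ≤ ℓ) :
    u < Lr ℓ r (u % ℓ + 1) (jdx ℓ r u + 1) := by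
  have hj : jdx ℓ r u ≤ u := Nat.findGreatest_le u
  rcases lt_or_eq_of_le hj with h | h
  · have hgt : ¬ Lr ℓ r (u % ℓ + 1) (jdx ℓ r u + 1) ≤ u :=
      Nat.findGreatest_is_greatest (P := fun j => Lr ℓ r (u % ℓ + 1) j ≤ u) (n := u)
        (Nat.lt_succ_self _) (by omega)
    omega
  · have h1 : u + 1 ≤ Lr ℓ r (u % ℓ + 1) (u+1) := le_Lr ℓ r _ (u+1) hℓ
    rw [h]; omega

lemma phi_mod (ℓ r u : ℕ) : phi ℓ r u % ℓ = u % ℓ := by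
  unfold phi
  rw [Lr_mod]
  simp only [Nat.add_sub_cancel]
  exact Nat.mod_mod_of_dvd u dvd_rfl

lemma reach_core (ℓ r u v LJ LJ1 : ℕ) (hℓ : 1 ≤ ℓ) (hu : LJ ≤ u) (huv : u ≤ v)
    (hv : v < LJ1) (hmod : u % ℓ = v % ℓ) (hmodL : LJ1 % ℓ = v % ℓ)
    (hrec : LJ1 = LJ * (r*ℓ+1) + r*ℓ + ℓ) :
    ∃ c, c ≤ (u+1)*r ∧ v = u + c * ℓ := by
  have hℓ0 : 0 < ℓ := hℓ
  have hdvd1 : ℓ ∣ LJ1 - v := by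
    have h4 : v ≡ LJ1 [MOD ℓ] := by unfold Nat.ModEq; omega
    exact (Nat.modEq_iff_dvd' (le_of_lt hv)).mp h4
  have hvle : v + ℓ ≤ LJ1 := by
    obtain ⟨k, hk⟩ := hdvd1
    have hk1 : 1 ≤ k := by
      rcases Nat.eq_zero_or_pos k with h0 | h0
      · rw [h0, Nat.mul_zero] at hk; omega
      · exact h0
    have h5 : ℓ ≤ ℓ * k := Nat.le_mul_of_pos_right ℓ hk1
    omega
  have hbound : v ≤ u + ((u+1) * r) * ℓ := by
    have h6 : LJ * (r*ℓ+1) ≤ u * (r*ℓ+1) := Nat.mul_le_mul_right _ hu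
    have h7 : u * (r*ℓ+1) = u + (u * r) * ℓ := by ring
    have h8 : ((u+1) * r) * ℓ = (u*r) * ℓ + r * ℓ := by ring
    omega
  have hdvd2 : ℓ ∣ v - u := by
    have h9 : u ≡ v [MOD ℓ] := hmod
    exact (Nat.modEq_iff_dvd' huv).mp h9
  obtain ⟨c, hc⟩ := hdvd2
  rw [Nat.mul_comm] at hc
  refine ⟨c, ?_, by omega⟩
  have h10 : c * ℓ ≤ ((u+1) * r) * ℓ := by
    have : ℓ * c = c * ℓ := Nat.mul_comm _ _
    omega
  exact Nat.le_of_mul_le_mul_right h10 hℓ0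

lemma reach_of_phi_eq (ℓ r u v : ℕ) (hℓ : 1 ≤ ℓ) (h : phi ℓ r u = phi ℓ r v)
    (huv : u ≤ v) : ∃ c, c ≤ (u+1)*r ∧ v = u + c * ℓ := by
  have hmod : u % ℓ = v % ℓ := by
    rw [← phi_mod ℓ r u, ← phi_mod ℓ r v, h]
  have hiv : v % ℓ + 1 = u % ℓ + 1 := by omega
  have hjeq : jdx ℓ r u = jdx ℓ r v := by
    have h2 := h
    unfold phi at h2
    rw [hiv] at h2
    exact (Lr_mono ℓ r (u % ℓ + 1) hℓ).injective h2
  have hu_lb : Lr ℓ r (u % ℓ + 1) (jdx ℓ r u) ≤ u := phi_le ℓ r u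
  have hv_ub : v < Lr ℓ r (u % ℓ + 1) (jdx ℓ r u + 1) := by
    have h3 := lt_Lr_succ_jdx ℓ r v hℓ
    rwa [hiv, ← hjeq] at h3
  have hLmod : Lr ℓ r (u % ℓ + 1) (jdx ℓ r u + 1) % ℓ = v % ℓ := by
    rw [Lr_mod]
    simp only [Nat.add_sub_cancel]
    rw [Nat.mod_mod_of_dvd u dvd_rfl]
    omega
  exact reach_core ℓ r u v _ _ hℓ hu_lb huv hv_ub hmod hLmod rfl

/-! ### Channel lemmas -/

lemma isOutput_append {ℓ r : ℕ} {x y x' y' : List ℕ} (h : IsOutput ℓ r x y)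
    (h' : IsOutput ℓ r x' y') : IsOutput ℓ r (x ++ x') (y ++ y') := by
  induction h with
  | nil => simpa
  | cons a c hc hxy ih =>
      rw [List.cons_append, List.cons_append, List.append_assoc]
      exact IsOutput.cons a c hc ih

lemma isOutput_block {ℓ r : ℕ} (a u c : ℕ) (hc : c ≤ (u+1)*r) :
    IsOutput ℓ r (a :: List.replicate u 0) (a :: List.replicate (u + c*ℓ) 0) := by
  induction u generalizing a c with
  | zero =>
      have h1 := IsOutput.cons (ℓ := ℓ) (r := r) a c (by omega) IsOutput.nil
      simpa using h1
  | succ u ih =>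
      have hc2 : c - min c r ≤ (u+1)*r := by
        have : (u+1+1)*r = (u+1)*r + r := by ring
        omega
      have ih2 := ih 0 (c - min c r) hc2
      have h1 := IsOutput.cons (ℓ := ℓ) (r := r) a (min c r) (min_le_right c r) ih2
      have heq : (List.replicate (min c r * ℓ) 0 ++
          0 :: List.replicate (u + (c - min c r) * ℓ) 0 : List ℕ)
          = List.replicate (u + 1 + c * ℓ) 0 := by
        have h2 : (0 : ℕ) :: List.replicate (u + (c - min c r) * ℓ) 0
            = List.replicate (u + (c - min c r) * ℓ + 1) 0 := by
          rw [List.replicate_succ]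
        rw [h2, ← List.replicate_add]
        congr 1
        have h3 : min c r * ℓ + (c - min c r) * ℓ = c * ℓ := by
          rw [← Nat.add_mul]
          congr 1
          omega
        omega
      rw [heq] at h1
      have h4 : (a :: (0 : ℕ) :: List.replicate u 0) = a :: List.replicate (u+1) 0 := by
        rw [List.replicate_succ]
      rwa [h4] at h1

/-! ### Blocks and parsing -/

def blocks (l : List (ℕ × ℕ)) : List ℕ := (l.map fun p => block p.1 p.2).flatten

@[simp] lemma blocks_nil : blocks [] = [] := rfl

@[simp] lemma blocks_cons (p : ℕ × ℕ) (l : List (ℕ × ℕ)) :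
    blocks (p :: l) = p.1 :: (List.replicate p.2 0 ++ blocks l) := by
  simp [blocks, block]

def parse : List ℕ → List (ℕ × ℕ)
  | [] => []
  | a :: t => (a, (t.takeWhile (· == 0)).length) :: parse (t.dropWhile (· == 0))
  termination_by x => x.length
  decreasing_by
    simp only [List.length_cons]
    have := (List.dropWhile_sublist (p := (· == 0)) (l := t)).length_le
    omega

lemma dropWhile_cond (p : ℕ → Bool) :
    ∀ t : List ℕ, t.dropWhile p = [] ∨ p ((t.dropWhile p).headI) = false := by
  intro t
  induction t with
  | nil => exact Or.inl rfl
  | cons a t ih =>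
      by_cases h : p a
      · simpa [List.dropWhile_cons, h] using ih
      · simp [List.dropWhile_cons, h]

lemma blocks_parse (x : List ℕ) (hx : x = [] ∨ x.headI ≠ 0) : blocks (parse x) = x := by
  induction x using parse.induct with
  | case1 => simp [parse]
  | case2 a t ih =>
      have ht : t.dropWhile (· == 0) = [] ∨ (t.dropWhile (· == 0)).headI ≠ 0 := by
        rcases dropWhile_cond (· == 0) t with h | h
        · exact Or.inl h
        · exact Or.inr (by simpa using h)
      have htw : t.takeWhile (· == 0) =
          List.replicate (t.takeWhile (· == 0)).length 0 := by
        rw [List.eq_replicate_iff]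
        refine ⟨rfl, fun b hb => ?_⟩
        have := List.mem_takeWhile_imp hb
        simpa using this
      rw [parse, blocks_cons, ih ht]
      simp only
      rw [← htw, List.takeWhile_append_dropWhile]

lemma takeWhile_rep_append (u : ℕ) (t : List ℕ) (ht : t = [] ∨ t.headI ≠ 0) :
    (List.replicate u 0 ++ t).takeWhile (· == 0) = List.replicate u 0 ∧
    (List.replicate u 0 ++ t).dropWhile (· == 0) = t := by
  induction u with
  | zero =>
      simp only [List.replicate_zero, List.nil_append]
      rcases ht with rfl | h
      · simp
      · cases t with
        | nil => simp
        | cons b s =>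
            have hb : (b == 0) = false := by simpa using h
            simp [List.takeWhile_cons, List.dropWhile_cons, hb]
  | succ u ih =>
      simp only [List.replicate_succ, List.cons_append, List.takeWhile_cons,
        List.dropWhile_cons]
      simpa using ih

lemma blocks_head_cond (l : List (ℕ × ℕ)) (hl : ∀ p ∈ l, p.1 ≠ 0) :
    blocks l = [] ∨ (blocks l).headI ≠ 0 := by
  cases l with
  | nil => exact Or.inl rfl
  | cons p l => exact Or.inr (by simpa using hl p (by simp))

lemma parse_blocks (l : List (ℕ × ℕ)) (hl : ∀ p ∈ l, p.1 ≠ 0) :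
    parse (blocks l) = l := by
  induction l with
  | nil => simp [parse]
  | cons p l ih =>
      have hl' : ∀ p ∈ l, p.1 ≠ 0 := fun p hp => hl p (by simp [hp])
      obtain ⟨h1, h2⟩ := takeWhile_rep_append p.2 (blocks l) (blocks_head_cond l hl')
      rw [blocks_cons, parse, h1, h2, List.length_replicate, ih hl']

/-! ### parse facts -/

lemma parse_fst_mem (x : List ℕ) : ∀ p ∈ parse x, p.1 ∈ x := by
  induction x using parse.induct with
  | case1 => simp [parse]
  | case2 a t ih =>
      intro p hp
      rw [parse] at hp
      rcases List.mem_cons.mp hp with rfl | hp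
      · simp
      · have := ih p hp
        exact List.mem_cons_of_mem a ((List.dropWhile_sublist _).mem this)

lemma parse_fst_ne_zero (x : List ℕ) (hx : x = [] ∨ x.headI ≠ 0) :
    ∀ p ∈ parse x, p.1 ≠ 0 := by
  induction x using parse.induct with
  | case1 => simp [parse]
  | case2 a t ih =>
      intro p hp
      rw [parse] at hp
      have ha : a ≠ 0 := by
        rcases hx with h | h
        · exact absurd h (by simp)
        · simpa using h
      rcases List.mem_cons.mp hp with rfl | hp
      · exact ha
      · refine ih ?_ p hp
        rcases dropWhile_cond (· == 0) t with h | h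
        · exact Or.inl h
        · exact Or.inr (by simpa using h)

lemma mem_blocks (l : List (ℕ × ℕ)) (a : ℕ) (ha : a ∈ blocks l) :
    a = 0 ∨ ∃ p ∈ l, a = p.1 := by
  induction l with
  | nil => simp at ha
  | cons p l ih =>
      rw [blocks_cons] at ha
      rcases List.mem_cons.mp ha with rfl | ha
      · exact Or.inr ⟨p, by simp⟩
      · rcases List.mem_append.mp ha with h | h
        · exact Or.inl (List.eq_of_mem_replicate h)
        · rcases ih h with h | ⟨q, hq, rfl⟩
          · exact Or.inl h
          · exact Or.inr ⟨q, by simp [hq]⟩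

lemma length_blocks (l : List (ℕ × ℕ)) :
    (blocks l).length = (l.map fun p => p.2 + 1).sum := by
  induction l with
  | nil => simp
  | cons p l ih => simp [blocks_cons, ih]; omega

/-! ### The canonical map -/

def canonP (ℓ r : ℕ) (l : List (ℕ × ℕ)) : List (ℕ × ℕ) := l.map fun p => (p.1, phi ℓ r p.2)

def canon (ℓ r : ℕ) (x : List ℕ) : List ℕ := blocks (canonP ℓ r (parse x))

lemma confusable_blocks (ℓ r : ℕ) (hℓ : 1 ≤ ℓ) :
    ∀ l l' : List (ℕ × ℕ), canonP ℓ r l = canonP ℓ r l' →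
    Confusable ℓ r (blocks l) (blocks l') := by
  intro l
  induction l with
  | nil =>
      intro l' h
      cases l' with
      | nil => exact ⟨[], IsOutput.nil, IsOutput.nil⟩
      | cons p l' => simp [canonP] at h
  | cons p l ih =>
      intro l' h
      cases l' with
      | nil => simp [canonP] at h
      | cons p' l' =>
          simp only [canonP, List.map_cons, List.cons.injEq, Prod.mk.injEq] at h
          obtain ⟨⟨hfst, hphi⟩, htail⟩ := h
          obtain ⟨z, hz1, hz2⟩ := ih l' htail
          rcases le_total p.2 p'.2 with huv | huv
          · obtain ⟨c, hc, hv⟩ := reach_of_phi_eq ℓ r p.2 p'.2 hℓ hphi huv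
            refine ⟨(p.1 :: List.replicate p'.2 0) ++ z, ?_, ?_⟩
            · rw [blocks_cons, ← List.cons_append]
              refine isOutput_append ?_ hz1
              have := isOutput_block (ℓ := ℓ) (r := r) p.1 p.2 c hc
              rwa [← hv] at this
            · rw [blocks_cons, ← List.cons_append, ← hfst]
              refine isOutput_append ?_ hz2
              have := isOutput_block (ℓ := ℓ) (r := r) p.1 p'.2 0 (by omega)
              simpa using this
          · obtain ⟨c, hc, hv⟩ := reach_of_phi_eq ℓ r p'.2 p.2 hℓ hphi.symm huv
            refine ⟨(p.1 :: List.replicate p.2 0) ++ z, ?_, ?_⟩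
            · rw [blocks_cons, ← List.cons_append]
              refine isOutput_append ?_ hz1
              have := isOutput_block (ℓ := ℓ) (r := r) p.1 p.2 0 (by omega)
              simpa using this
            · rw [blocks_cons, ← List.cons_append, ← hfst]
              refine isOutput_append ?_ hz2
              have := isOutput_block (ℓ := ℓ) (r := r) p.1 p'.2 c hc
              rwa [← hv] at this

lemma confusable_of_canon_eq (ℓ r : ℕ) (hℓ : 1 ≤ ℓ) (x y : List ℕ)
    (hx : x = [] ∨ x.headI ≠ 0) (hy : y = [] ∨ y.headI ≠ 0)
    (h : canon ℓ r x = canon ℓ r y) : Confusable ℓ r x y := by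
  have hfx : ∀ p ∈ canonP ℓ r (parse x), p.1 ≠ 0 := by
    intro p hp
    obtain ⟨q, hq, rfl⟩ := List.mem_map.mp hp
    exact parse_fst_ne_zero x hx q hq
  have hfy : ∀ p ∈ canonP ℓ r (parse y), p.1 ≠ 0 := by
    intro p hp
    obtain ⟨q, hq, rfl⟩ := List.mem_map.mp hp
    exact parse_fst_ne_zero y hy q hq
  have heq : canonP ℓ r (parse x) = canonP ℓ r (parse y) := by
    rw [← parse_blocks _ hfx, ← parse_blocks _ hfy]
    exact congrArg parse h
  have := confusable_blocks ℓ r hℓ (parse x) (parse y) heq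
  rwa [blocks_parse x hx, blocks_parse y hy] at this

lemma canon_mem_C (q ℓ r n : ℕ) (hq : 2 ≤ q) (hℓ : 1 ≤ ℓ) (hr : 1 ≤ r) (x : List ℕ)
    (hx : x ∈ S q n) : canon ℓ r x ∈ C q ℓ r n := by
  obtain ⟨hne, hlen, hlt, hhead⟩ := hx
  have hx' : x = [] ∨ x.headI ≠ 0 := Or.inr hhead
  constructor
  · refine ⟨?_, ?_, ?_, ?_⟩
    · cases x with
      | nil => exact absurd rfl hne
      | cons a t =>
          rw [canon, parse]
          simp [canonP]
    · have h1 : (canon ℓ r x).length =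
          ((parse x).map fun p => phi ℓ r p.2 + 1).sum := by
        rw [canon, length_blocks, canonP, List.map_map]
        rfl
      have h2 : x.length = ((parse x).map fun p => p.2 + 1).sum := by
        conv_lhs => rw [← blocks_parse x hx']
        rw [length_blocks]
      have h3 : ((parse x).map fun p => phi ℓ r p.2 + 1).sum ≤
          ((parse x).map fun p => p.2 + 1).sum := by
        refine List.sum_le_sum fun p _ => ?_
        have := phi_le ℓ r p.2
        omega
      omega
    · intro a ha
      rcases mem_blocks _ a ha with rfl | ⟨p, hp, rfl⟩
      · omega
      · obtain ⟨p', hp', rfl⟩ := List.mem_map.mp hp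
        exact hlt _ (parse_fst_mem x p' hp')
    · cases x with
      | nil => exact absurd rfl hne
      | cons a t =>
          rw [canon, parse]
          simp only [canonP, List.map_cons, blocks_cons]
          simpa using hhead
  · refine ⟨(canonP ℓ r (parse x)).map fun p => block p.1 p.2, ?_, ?_⟩
    · intro b hb
      obtain ⟨p, hp, rfl⟩ := List.mem_map.mp hb
      obtain ⟨p', hp', rfl⟩ := List.mem_map.mp hp
      have hσ : p'.1 ≠ 0 := parse_fst_ne_zero x hx' p' hp'
      have hσq : p'.1 < q := hlt _ (parse_fst_mem x p' hp')
      refine ⟨p'.1, p'.2 % ℓ + 1, jdx ℓ r p'.2, by omega, by omega, by omega, ?_, ?_⟩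
      · have := Nat.mod_lt p'.2 (show 0 < ℓ by omega)
        omega
      · simp only
        rw [← Lr_eq_L ℓ r _ hr (by omega)]
        rfl
    · rw [canon, blocks]

/-! ### Finiteness -/

lemma S_finite (q n : ℕ) (hq : 1 ≤ q) : (S q n).Finite := by
  have h : S q n ⊆ (fun l : List (Fin q) => l.map Fin.val) '' {l | l.length ≤ n} := by
    intro x hx
    refine ⟨x.map (fun a => ⟨a % q, Nat.mod_lt _ (by omega)⟩), by simpa using hx.2.1, ?_⟩
    dsimp only
    rw [List.map_map]
    have : ∀ a ∈ x, (Fin.val ∘ fun a : ℕ => (⟨a % q, Nat.mod_lt _ (by omega)⟩ : Fin q)) a = id a := by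
      intro a ha
      have := hx.2.2.1 a ha
      simp [Nat.mod_eq_of_lt this]
    rw [List.map_congr_left this, List.map_id]
  exact ((List.finite_length_le (Fin q) n).image _).subset h

/-! ### Main theorem -/

/-- every zero-error code `Code ⊆ S q n` for the (ℓ,r)-0-insertion channel
satisfies `|Code| ≤ |C q ℓ r n|`. -/
theorem stmt2 (q ℓ r n : ℕ) (hq : 2 ≤ q) (hℓ : 1 ≤ ℓ) (hr : 1 ≤ r) (hn : 1 ≤ n)
    (Code : Set (List ℕ)) (hsub : Code ⊆ S q n) (hze : ZeroErrorCode ℓ r Code) :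
    Code.ncard ≤ (C q ℓ r n).ncard := by
  have hinj : Set.InjOn (canon ℓ r) Code := by
    intro x hx y hy hxy
    by_contra hne
    exact hze x hx y hy hne
      (confusable_of_canon_eq ℓ r hℓ x y (Or.inr (hsub hx).2.2.2) (Or.inr (hsub hy).2.2.2) hxy)
  have himg : canon ℓ r '' Code ⊆ C q ℓ r n := by
    rintro _ ⟨x, hx, rfl⟩
    exact canon_mem_C q ℓ r n hq hℓ hr x (hsub hx)
  have hCfin : (C q ℓ r n).Finite := (S_finite q n (by omega)).subset (fun x hx => hx.1)
  calc Code.ncard = (canon ℓ r '' Code).ncard := (Set.ncard_image_of_injOn hinj).symm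
    _ ≤ (C q ℓ r n).ncard := Set.ncard_le_ncard himg hCfin

end ZeroErrorDup
end

section
/- For every σ ∈ {1,…,q−1} and every u ≥ 0: f(σ 0^{u}) is a block in B_{q,ℓ,r}, and σ 0^{u} is an output of f(σ 0^{u}) under the (ℓ,r)-0-insertion channel (so every block is confusable with its image under f). -/
namespace ZeroErrorDup

/-- Reduced run length: the largest integer of the form `L ℓ r i j` (with `1 ≤ i ≤ ℓ`,
`j ≥ 0`) that is at most `u` and congruent to `u` modulo `ℓ` (such an integer always
exists). -/
noncomputable def g (ℓ r u : ℕ) : ℕ :=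
  sSup { m | (∃ i j : ℕ, 1 ≤ i ∧ i ≤ ℓ ∧ m = L ℓ r i j) ∧ m ≤ u ∧ m % ℓ = u % ℓ }

/-- The map `f`, shortening each maximal run of zeros of length `u` to length `g ℓ r u`
and leaving all nonzero symbols in place. -/
noncomputable def f (ℓ r : ℕ) (x : List ℕ) : List ℕ :=
  match h : x.dropWhile (· == 0) with
  | [] => List.replicate (g ℓ r (x.takeWhile (· == 0)).length) 0
  | a :: t =>
      List.replicate (g ℓ r (x.takeWhile (· == 0)).length) 0 ++ a :: f ℓ r t
termination_by x.length
decreasing_by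
  have h1 : (x.dropWhile (· == 0)).length ≤ x.length :=
    (List.dropWhile_sublist _).length_le
  rw [h] at h1
  simp only [List.length_cons] at h1
  omega

/-!
`f (σ 0^u) = σ 0^{g u}`, and `u - g u` is a multiple of `ℓ`. Writing `g u = L i j`, the next
length in the chain, `L i (j+1) = g u + ℓ (r (g u + 1) + 1)`, is also congruent to `u` modulo `ℓ`,
so maximality of `g u` forces `u - g u ≤ ℓ r (g u + 1)`: few enough blocks `0^ℓ` for the
`g u + 1` symbols of `σ 0^{g u}` to absorb, at most `r` each.
-/

lemma f_of_dropWhile_eq_nil {ℓ r : ℕ} {x : List ℕ} (h : x.dropWhile (· == 0) = []) :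
    f ℓ r x = List.replicate (g ℓ r (x.takeWhile (· == 0)).length) 0 := by
  rw [f]
  split <;> simp_all

lemma f_of_dropWhile_eq_cons {ℓ r : ℕ} {x t : List ℕ} {a : ℕ}
    (h : x.dropWhile (· == 0) = a :: t) :
    f ℓ r x = List.replicate (g ℓ r (x.takeWhile (· == 0)).length) 0 ++ a :: f ℓ r t := by
  rw [f]
  split <;> simp_all

lemma exists_pow_eq_mul_add_one (r ℓ j : ℕ) : ∃ s, (r * ℓ + 1) ^ j = r * s + 1 := by
  induction j with
  | zero => exact ⟨0, by simp⟩
  | succ j ih =>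
    obtain ⟨s, hs⟩ := ih
    exact ⟨s * (r * ℓ + 1) + ℓ, by rw [pow_succ, hs]; ring⟩

lemma mul_L_add_one_add_one {ℓ r i : ℕ} (hr : 1 ≤ r) (hi : 1 ≤ i) (j : ℕ) :
    r * (L ℓ r i j + 1) + 1 = (r * i + 1) * (r * ℓ + 1) ^ j := by
  obtain ⟨s, hs⟩ := exists_pow_eq_mul_add_one r ℓ j
  have hP : (r * i + 1) * (r * ℓ + 1) ^ j = r * (i * (r * s + 1) + s) + 1 := by
    rw [hs]; ring
  have hk : 1 ≤ i * (r * s + 1) + s := by nlinarith [Nat.zero_le (i * (r * s))]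
  rw [L, hP, Nat.add_sub_cancel, Nat.mul_div_cancel_left _ (by omega), Nat.sub_add_cancel hk]

lemma L_zero {ℓ r i : ℕ} (hr : 1 ≤ r) (hi : 1 ≤ i) : L ℓ r i 0 = i - 1 := by
  have := mul_L_add_one_add_one (ℓ := ℓ) hr hi 0
  rw [pow_zero, mul_one] at this
  have := Nat.eq_of_mul_eq_mul_left (by omega : 0 < r) (Nat.add_right_cancel this)
  omega

lemma L_succ {ℓ r i : ℕ} (hr : 1 ≤ r) (hi : 1 ≤ i) (j : ℕ) :
    L ℓ r i (j + 1) = L ℓ r i j + ℓ * (r * (L ℓ r i j + 1) + 1) := by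
  have hj := mul_L_add_one_add_one (ℓ := ℓ) hr hi j
  have hj1 := mul_L_add_one_add_one (ℓ := ℓ) hr hi (j + 1)
  rw [pow_succ, ← mul_assoc, ← hj] at hj1
  refine Nat.add_right_cancel (m := 1) (Nat.eq_of_mul_eq_mul_left (by omega : 0 < r) ?_)
  linarith

lemma g_mem {ℓ r : ℕ} (hℓ : 1 ≤ ℓ) (hr : 1 ≤ r) (u : ℕ) :
    (∃ i j : ℕ, 1 ≤ i ∧ i ≤ ℓ ∧ g ℓ r u = L ℓ r i j) ∧ g ℓ r u ≤ u ∧ g ℓ r u % ℓ = u % ℓ := by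
  have hmod : u % ℓ < ℓ := Nat.mod_lt u (by omega)
  set S := { m | (∃ i j : ℕ, 1 ≤ i ∧ i ≤ ℓ ∧ m = L ℓ r i j) ∧ m ≤ u ∧ m % ℓ = u % ℓ }
  show g ℓ r u ∈ S
  refine Nat.sSup_mem ⟨u % ℓ, ⟨u % ℓ + 1, 0, by omega, by omega, ?_⟩, Nat.mod_le u ℓ,
    Nat.mod_mod u ℓ⟩ ⟨u, fun m hm => hm.2.1⟩
  rw [L_zero hr (by omega)]
  rfl

lemma L_le_g {ℓ r u i j : ℕ} (hi : 1 ≤ i) (hiℓ : i ≤ ℓ) (hu : L ℓ r i j ≤ u)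
    (hmod : L ℓ r i j % ℓ = u % ℓ) : L ℓ r i j ≤ g ℓ r u :=
  le_csSup ⟨u, fun _ hm => hm.2.1⟩ ⟨⟨i, j, hi, hiℓ, rfl⟩, hu, hmod⟩

lemma g_zero {ℓ r : ℕ} (hℓ : 1 ≤ ℓ) (hr : 1 ≤ r) : g ℓ r 0 = 0 :=
  Nat.le_zero.mp (g_mem hℓ hr 0).2.1

lemma exists_eq_g_add_mul {ℓ r : ℕ} (hℓ : 1 ≤ ℓ) (hr : 1 ≤ r) (u : ℕ) :
    ∃ t ≤ r * (g ℓ r u + 1), u = g ℓ r u + t * ℓ := by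
  obtain ⟨⟨i, j, hi, hiℓ, hgL⟩, hgu, hgmod⟩ := g_mem hℓ hr u
  obtain ⟨t, ht⟩ := (Nat.modEq_iff_dvd' hgu).mp hgmod
  refine ⟨t, ?_, by rw [Nat.mul_comm t, ← ht, Nat.add_sub_cancel' hgu]⟩
  by_contra! hlt
  have hnext : L ℓ r i (j + 1) = g ℓ r u + ℓ * (r * (g ℓ r u + 1) + 1) := by
    rw [L_succ hr hi, hgL]
  have hle : ℓ * (r * (g ℓ r u + 1) + 1) ≤ ℓ * t := Nat.mul_le_mul_left ℓ hlt
  have hmax := L_le_g (r := r) (u := u) (j := j + 1) hi hiℓ (by omega)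
    (by rw [hnext, Nat.add_mul_mod_self_left, hgmod])
  have hpos : 0 < ℓ * (r * (g ℓ r u + 1) + 1) := by positivity
  omega

lemma f_replicate_zero (ℓ r u : ℕ) : f ℓ r (List.replicate u 0) = List.replicate (g ℓ r u) 0 := by
  rw [f_of_dropWhile_eq_nil (by simp), List.takeWhile_replicate_eq_filter]
  simp

lemma f_block {ℓ r σ : ℕ} (hℓ : 1 ≤ ℓ) (hr : 1 ≤ r) (hσ : σ ≠ 0) (u : ℕ) :
    f ℓ r (block σ u) = block σ (g ℓ r u) := by
  have hσ' : ¬ (σ == 0) = true := by simpa using hσ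
  have hdrop : (block σ u).dropWhile (· == 0) = σ :: List.replicate u 0 :=
    List.dropWhile_cons_of_neg hσ'
  have htake : (block σ u).takeWhile (· == 0) = [] := List.takeWhile_cons_of_neg hσ'
  rw [f_of_dropWhile_eq_cons hdrop, htake, f_replicate_zero, List.length_nil, g_zero hℓ hr]
  rfl

lemma isOutput_block_s7 (ℓ r : ℕ) (a : ℕ) {m t : ℕ} (ht : t ≤ r * (m + 1)) :
    IsOutput ℓ r (block a m) (block a (m + t * ℓ)) := by
  induction m generalizing a t with
  | zero =>
    simpa [block] using IsOutput.cons a t (by omega) IsOutput.nil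
  | succ m ih =>
    have hrest : t - min t r ≤ r * (m + 1) := by rw [Nat.mul_succ] at ht; omega
    have hsplit : min t r * ℓ + (t - min t r) * ℓ = t * ℓ := by
      rw [← Nat.add_mul, Nat.add_sub_cancel' (min_le_left t r)]
    have h := IsOutput.cons (ℓ := ℓ) a (min t r) (min_le_right t r) (ih 0 hrest)
    simp only [block, ← List.replicate_succ, ← List.replicate_add] at h
    rwa [show min t r * ℓ + (m + (t - min t r) * ℓ + 1) = m + 1 + t * ℓ by omega] at h

theorem stmt7_general (q ℓ r : ℕ) (hℓ : 1 ≤ ℓ) (hr : 1 ≤ r)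
    (σ u : ℕ) (hσ1 : 1 ≤ σ) (hσ2 : σ ≤ q - 1) :
    f ℓ r (block σ u) ∈ B q ℓ r ∧ IsOutput ℓ r (f ℓ r (block σ u)) (block σ u) := by
  rw [f_block hℓ hr (by omega)]
  obtain ⟨⟨i, j, hi, hiℓ, hgL⟩, -, -⟩ := g_mem hℓ hr u
  obtain ⟨t, ht, hu⟩ := exists_eq_g_add_mul hℓ hr u
  refine ⟨⟨σ, i, j, hσ1, hσ2, hi, hiℓ, by rw [hgL]⟩, ?_⟩
  conv_rhs => rw [hu]
  exact isOutput_block_s7 ℓ r σ ht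

/-- for every `σ ∈ {1,…,q−1}` and `u ≥ 0`, `f (σ 0^u)` is a block of
`B q ℓ r`, and `σ 0^u` is an output of `f (σ 0^u)` under the (ℓ,r)-0-insertion channel
(so every block is confusable with its image under `f`). -/
theorem stmt7 (q ℓ r : ℕ) (hq : 2 ≤ q) (hℓ : 1 ≤ ℓ) (hr : 1 ≤ r)
    (σ u : ℕ) (hσ1 : 1 ≤ σ) (hσ2 : σ ≤ q - 1) :
    f ℓ r (block σ u) ∈ B q ℓ r ∧ IsOutput ℓ r (f ℓ r (block σ u)) (block σ u) :=
  stmt7_general q ℓ r hℓ hr σ u hσ1 hσ2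

end ZeroErrorDup
end

section
/- Every nonempty string in S_q(n) that is a concatenation of blocks from B_{q,ℓ,r} decomposes uniquely as such a concatenation, and consequently the cardinality of C_{q,ℓ,r}(n) satisfies, for all n ≥ 1, the recurrence |C_{q,ℓ,r}(n)| = (q−1) · Σ over pairs (i,j) with 1 ≤ i ≤ ℓ, j ≥ 0 and L(i,j)+1 ≤ n of (1 + |C_{q,ℓ,r}(n − (L(i,j)+1))|), with the convention |C_{q,ℓ,r}(0)| = 0. -/
/-!
A block is a nonzero symbol followed by a run of zeros, so a concatenation of blocks is cut
uniquely just before each nonzero symbol. Removing the first block `σ 0^{L(i,j)}` from a string of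
`C(n)` leaves the empty string or a string of `C(n - L(i,j) - 1)`. Distinct pairs `(i, j)` give
distinct run lengths because `r (L(i,j) + 1) + 1 = (r i + 1)(r ℓ + 1)^j` with
`1 < r i + 1 ≤ r ℓ + 1`, which determines `i` and `j` like a leading digit and an exponent.
-/

namespace ZeroErrorDup

lemma exists_mul_add_one_eq (ℓ r i j : ℕ) (hi : 1 ≤ i) :
    ∃ c, 1 ≤ c ∧ (r * i + 1) * (r * ℓ + 1) ^ j = r * c + 1 := by
  induction j with
  | zero => exact ⟨i, hi, by ring⟩
  | succ j ih =>
    obtain ⟨c, hc, h⟩ := ih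
    exact ⟨r * c * ℓ + c + ℓ, by omega, by rw [pow_succ, ← mul_assoc, h]; ring⟩

lemma L_spec (ℓ r i j : ℕ) (hr : 1 ≤ r) (hi : 1 ≤ i) :
    r * (L ℓ r i j + 1) + 1 = (r * i + 1) * (r * ℓ + 1) ^ j := by
  obtain ⟨c, hc, h⟩ := exists_mul_add_one_eq ℓ r i j hi
  rw [L, h, Nat.add_sub_cancel, Nat.mul_div_cancel_left c (by omega), Nat.sub_add_cancel hc]

lemma le_L (ℓ r i j : ℕ) (hr : 1 ≤ r) (hi : 1 ≤ i) (hiℓ : i ≤ ℓ) : j ≤ L ℓ r i j := by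
  have hpow : 1 + r * j ≤ (r * ℓ + 1) ^ j :=
    calc 1 + r * j ≤ 1 + j * (r * ℓ) := by
          rw [mul_comm r j]; gcongr; exact Nat.le_mul_of_pos_right r (by omega)
      _ ≤ (1 + r * ℓ) ^ j := one_add_le_pow_of_two_add_nonneg (by positivity) j
      _ = (r * ℓ + 1) ^ j := by rw [add_comm]
  have hprod : (r + 1) * (1 + r * j) ≤ r * (L ℓ r i j + 1) + 1 := by
    rw [L_spec ℓ r i j hr hi]
    exact Nat.mul_le_mul (by nlinarith) hpow
  have hexpand : (r + 1) * (1 + r * j) = r * j + r + 1 + r * (r * j) := by ring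
  rw [hexpand, mul_add, mul_one] at hprod
  exact Nat.le_of_mul_le_mul_left (by omega) hr

lemma mul_pow_lt_mul_pow {a a' b j j' : ℕ} (ha : a ≤ b) (ha' : 1 < a') (hb : 0 < b)
    (hj : j < j') : a * b ^ j < a' * b ^ j' :=
  calc a * b ^ j ≤ b ^ (j + 1) := by rw [pow_succ']; exact Nat.mul_le_mul_right _ ha
    _ ≤ b ^ j' := Nat.pow_le_pow_right hb hj
    _ < a' * b ^ j' := lt_mul_left (by positivity) ha'

lemma eq_and_eq_of_mul_pow_eq {a a' b j j' : ℕ} (ha : 1 < a) (hab : a ≤ b) (ha' : 1 < a')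
    (hab' : a' ≤ b) (h : a * b ^ j = a' * b ^ j') : a = a' ∧ j = j' := by
  have hb : 0 < b := by omega
  obtain hj | rfl | hj := lt_trichotomy j j'
  · exact absurd h (mul_pow_lt_mul_pow hab ha' hb hj).ne
  · exact ⟨Nat.eq_of_mul_eq_mul_right (by positivity) h, rfl⟩
  · exact absurd h (mul_pow_lt_mul_pow hab' ha hb hj).ne'

lemma L_inj (ℓ r : ℕ) (hr : 1 ≤ r) {i j i' j' : ℕ} (hi : 1 ≤ i) (hiℓ : i ≤ ℓ)
    (hi' : 1 ≤ i') (hiℓ' : i' ≤ ℓ) (h : L ℓ r i j = L ℓ r i' j') : i = i' ∧ j = j' := by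
  have key : (r * i + 1) * (r * ℓ + 1) ^ j = (r * i' + 1) * (r * ℓ + 1) ^ j' := by
    rw [← L_spec ℓ r i j hr hi, ← L_spec ℓ r i' j' hr hi', h]
  obtain ⟨hii, rfl⟩ := eq_and_eq_of_mul_pow_eq (by nlinarith) (by nlinarith) (by nlinarith)
    (by nlinarith) key
  exact ⟨Nat.eq_of_mul_eq_mul_left hr (by omega), rfl⟩

lemma replicate_append_inj {α : Type*} {a : α} :
    ∀ {u u' : ℕ} {t t' : List α}, t.head? ≠ some a → t'.head? ≠ some a →
      List.replicate u a ++ t = List.replicate u' a ++ t' → u = u' ∧ t = t'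
  | 0, 0, _, _, _, _, h => ⟨rfl, h⟩
  | 0, _ + 1, _, _, ht, _, h => by
    rw [List.replicate_zero, List.nil_append] at h
    simp [h, List.replicate_succ] at ht
  | _ + 1, 0, _, _, _, ht', h => by
    rw [List.replicate_zero, List.nil_append] at h
    simp [← h, List.replicate_succ] at ht'
  | u + 1, u' + 1, _, _, ht, ht', h => by
    simp only [List.replicate_succ, List.cons_append, List.cons.injEq, true_and] at h
    obtain ⟨rfl, rfl⟩ := replicate_append_inj ht ht' h
    exact ⟨rfl, rfl⟩

lemma block_append_inj {σ σ' u u' : ℕ} {t t' : List ℕ} (ht : t.head? ≠ some 0)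
    (ht' : t'.head? ≠ some 0) (h : block σ u ++ t = block σ' u' ++ t') :
    σ = σ' ∧ u = u' ∧ t = t' := by
  simp only [block, List.cons_append, List.cons.injEq] at h
  exact ⟨h.1, replicate_append_inj ht ht' h.2⟩

section Blocks

variable {q ℓ r : ℕ}

lemma head?_flatten_ne_zero {bs : List (List ℕ)} (hbs : ∀ b ∈ bs, b ∈ B q ℓ r) :
    bs.flatten.head? ≠ some 0 := by
  cases bs with
  | nil => simp
  | cons b bs =>
    obtain ⟨σ, i, j, hσ, -, -, -, rfl⟩ := hbs b List.mem_cons_self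
    simpa [block] using Nat.one_le_iff_ne_zero.1 hσ

theorem flatten_inj_of_mem_B (bs bs' : List (List ℕ)) (hbs : ∀ b ∈ bs, b ∈ B q ℓ r)
    (hbs' : ∀ b ∈ bs', b ∈ B q ℓ r) (h : bs.flatten = bs'.flatten) : bs = bs' := by
  induction bs generalizing bs' with
  | nil =>
    cases bs' with
    | nil => rfl
    | cons b' _ =>
      obtain ⟨σ, i, j, -, -, -, -, rfl⟩ := hbs' b' List.mem_cons_self
      simp [block] at h
  | cons b bs ih =>
    obtain ⟨σ, i, j, -, -, -, -, rfl⟩ := hbs b List.mem_cons_self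
    cases bs' with
    | nil => simp [block] at h
    | cons b' bs' =>
      obtain ⟨σ', i', j', -, -, -, -, rfl⟩ := hbs' b' List.mem_cons_self
      have tail := fun b hb => hbs b (List.mem_cons_of_mem _ hb)
      have tail' := fun b hb => hbs' b (List.mem_cons_of_mem _ hb)
      obtain ⟨rfl, hu, hrest⟩ := block_append_inj (head?_flatten_ne_zero tail)
        (head?_flatten_ne_zero tail') h
      rw [hu, ih bs' tail tail' hrest]

end Blocks

lemma finite_length_le_forall_lt (q n : ℕ) :
    {l : List ℕ | l.length ≤ n ∧ ∀ a ∈ l, a < q}.Finite := by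
  refine ((List.finite_length_le (Fin q) n).image (List.map Fin.val)).subset ?_
  rintro l ⟨hlen, hlt⟩
  exact ⟨l.attach.map fun a => ⟨a.1, hlt a.1 a.2⟩, by simpa using hlen, by simp [List.map_map]⟩

lemma C_finite (q ℓ r n : ℕ) : (C q ℓ r n).Finite :=
  (finite_length_le_forall_lt q n).subset fun _ hx => ⟨hx.1.2.1, hx.1.2.2.1⟩

def blockCons (q ℓ r n u : ℕ) : Set (List ℕ) :=
  (fun st : ℕ × List ℕ => block st.1 u ++ st.2) ''
    (Set.Icc 1 (q - 1) ×ˢ insert [] (C q ℓ r (n - (u + 1))))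

def runIndices (ℓ r n : ℕ) : Finset (ℕ × ℕ) :=
  (Finset.Icc 1 ℓ ×ˢ Finset.range n).filter (fun p => L ℓ r p.1 p.2 + 1 ≤ n)

section Counting

variable {q ℓ r n u : ℕ}

lemma mem_insert_nil_C_iff {m : ℕ} {t : List ℕ} :
    t ∈ insert [] (C q ℓ r m) ↔ t.length ≤ m ∧ (∀ a ∈ t, a < q) ∧
      ∃ bs : List (List ℕ), (∀ b ∈ bs, b ∈ B q ℓ r) ∧ t = bs.flatten := by
  constructor
  · rintro (rfl | ⟨⟨-, hlen, hlt, -⟩, hbs⟩)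
    · exact ⟨by simp, by simp, [], by simp, rfl⟩
    · exact ⟨hlen, hlt, hbs⟩
  · rintro ⟨hlen, hlt, bs, hbs, rfl⟩
    cases hflat : bs.flatten with
    | nil => exact Or.inl rfl
    | cons a l =>
      have := head?_flatten_ne_zero hbs
      rw [hflat] at this hlen hlt
      exact Or.inr ⟨⟨List.cons_ne_nil a l, hlen, hlt, by simpa using this⟩, bs, hbs, hflat.symm⟩

lemma head?_ne_zero_of_mem_insert_nil_C {m : ℕ} {t : List ℕ} (ht : t ∈ insert [] (C q ℓ r m)) :
    t.head? ≠ some 0 := by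
  obtain ⟨-, -, bs, hbs, rfl⟩ := mem_insert_nil_C_iff.1 ht
  exact head?_flatten_ne_zero hbs

lemma blockCons_finite : (blockCons q ℓ r n u).Finite :=
  ((Set.finite_Icc 1 (q - 1)).prod ((C_finite q ℓ r _).insert [])).image _

lemma ncard_blockCons :
    (blockCons q ℓ r n u).ncard = (q - 1) * (1 + (C q ℓ r (n - (u + 1))).ncard) := by
  have hinj : Set.InjOn (fun st : ℕ × List ℕ => block st.1 u ++ st.2)
      (Set.Icc 1 (q - 1) ×ˢ insert [] (C q ℓ r (n - (u + 1)))) := by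
    rintro ⟨σ, t⟩ - ⟨σ', t'⟩ - h
    simp only [block, List.cons_append, List.cons.injEq, List.append_cancel_left_eq] at h
    rw [h.1, h.2]
  rw [blockCons, hinj.ncard_image, Set.ncard_prod, Set.ncard_Icc_nat,
    Set.ncard_insert_of_notMem (fun h => h.1.1 rfl) (C_finite q ℓ r _), Nat.add_sub_cancel,
    add_comm]

lemma disjoint_blockCons {u u' : ℕ} (h : u ≠ u') :
    Disjoint (blockCons q ℓ r n u) (blockCons q ℓ r n u') := by
  rw [Set.disjoint_left]
  rintro _ ⟨⟨σ, t⟩, ⟨-, ht⟩, rfl⟩ ⟨⟨σ', t'⟩, ⟨-, ht'⟩, heq⟩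
  exact h (block_append_inj (head?_ne_zero_of_mem_insert_nil_C ht')
    (head?_ne_zero_of_mem_insert_nil_C ht) heq).2.1.symm

lemma pairwiseDisjoint_blockCons (hr : 1 ≤ r) :
    (runIndices ℓ r n : Set (ℕ × ℕ)).PairwiseDisjoint
      fun p => blockCons q ℓ r n (L ℓ r p.1 p.2) := by
  intro p hp p' hp' hne
  simp only [runIndices, Finset.coe_filter, Finset.mem_product, Finset.mem_Icc] at hp hp'
  refine disjoint_blockCons fun h => hne ?_
  obtain ⟨h1, h2⟩ := L_inj ℓ r hr hp.1.1.1 hp.1.1.2 hp'.1.1.1 hp'.1.1.2 h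
  exact Prod.ext h1 h2

lemma C_eq_biUnion_blockCons (hr : 1 ≤ r) :
    C q ℓ r n = ⋃ p ∈ (runIndices ℓ r n : Set (ℕ × ℕ)), blockCons q ℓ r n (L ℓ r p.1 p.2) := by
  ext x
  simp only [Set.mem_iUnion, runIndices, Finset.coe_filter, Set.mem_ofPred_eq, Finset.mem_product,
    Finset.mem_Icc, Finset.mem_range, blockCons, Set.mem_image, Set.mem_prod, Set.mem_Icc,
    Prod.exists, exists_prop]
  constructor
  · rintro ⟨⟨hne, hlen, hlt, -⟩, _ | ⟨b, bs⟩, hbs, rfl⟩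
    · exact absurd rfl hne
    obtain ⟨σ, i, j, hσ, hσq, hi, hiℓ, rfl⟩ := hbs b List.mem_cons_self
    simp only [List.flatten_cons, List.length_append, block, List.length_cons,
      List.length_replicate] at hlen
    refine ⟨i, j, ⟨⟨⟨hi, hiℓ⟩, by have := le_L ℓ r i j hr hi hiℓ; omega⟩, by omega⟩,
      σ, bs.flatten, ⟨⟨hσ, hσq⟩, mem_insert_nil_C_iff.2 ⟨by omega, ?_, bs, ?_, rfl⟩⟩, rfl⟩
    · exact fun a ha => hlt a (List.mem_append_right _ ha)
    · exact fun b hb => hbs b (List.mem_cons_of_mem _ hb)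
  · rintro ⟨i, j, ⟨⟨⟨hi, hiℓ⟩, -⟩, hLn⟩, σ, t, ⟨⟨hσ, hσq⟩, ht⟩, rfl⟩
    obtain ⟨htlen, htlt, bs, hbs, rfl⟩ := mem_insert_nil_C_iff.1 ht
    refine ⟨⟨by simp [block], ?_, ?_, by simpa [block] using Nat.one_le_iff_ne_zero.1 hσ⟩,
      block σ (L ℓ r i j) :: bs, ?_, rfl⟩
    · simp only [List.length_append, block, List.length_cons, List.length_replicate]
      omega
    · simp only [block, List.cons_append, List.mem_cons, List.mem_append, List.mem_replicate]
      rintro a (rfl | ⟨-, rfl⟩ | ha) <;> first | omega | exact htlt a ha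
    · intro b hb
      rcases List.mem_cons.1 hb with rfl | hb
      · exact ⟨σ, i, j, hσ, hσq, hi, hiℓ, rfl⟩
      · exact hbs b hb

end Counting

theorem stmt11_general (q ℓ r : ℕ) (hr : 1 ≤ r) :
    (∀ bs bs' : List (List ℕ), (∀ b ∈ bs, b ∈ B q ℓ r) → (∀ b ∈ bs', b ∈ B q ℓ r) →
      bs.flatten = bs'.flatten → bs = bs') ∧
    (∀ n : ℕ, 1 ≤ n →
      (C q ℓ r n).ncard =
        (q - 1) * ∑ p ∈ (Finset.Icc 1 ℓ ×ˢ Finset.range n).filter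
            (fun p => L ℓ r p.1 p.2 + 1 ≤ n),
          (1 + (C q ℓ r (n - (L ℓ r p.1 p.2 + 1))).ncard)) := by
  refine ⟨flatten_inj_of_mem_B, fun n _ => ?_⟩
  rw [C_eq_biUnion_blockCons hr, (runIndices ℓ r n).finite_toSet.ncard_biUnion
    (fun _ _ => blockCons_finite) (pairwiseDisjoint_blockCons hr),
    finsum_mem_coe_finset, Finset.mul_sum]
  exact Finset.sum_congr rfl fun _ _ => ncard_blockCons

/-- every string that is a concatenation of blocks from `B q ℓ r`
decomposes uniquely as such a concatenation, and consequently the cardinality of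
`C q ℓ r n` satisfies the recurrence
`|C(n)| = (q−1) · Σ_{(i,j) : L(i,j)+1 ≤ n} (1 + |C(n − (L(i,j)+1))|)`
(the value `|C(0)| = 0` holds by definition, as `C q ℓ r 0 = ∅`; all indices `j`
with `L(i,j)+1 ≤ n` satisfy `j < n`). -/
theorem stmt11 (q ℓ r : ℕ) (hq : 2 ≤ q) (hℓ : 1 ≤ ℓ) (hr : 1 ≤ r) :
    (∀ bs bs' : List (List ℕ), (∀ b ∈ bs, b ∈ B q ℓ r) → (∀ b ∈ bs', b ∈ B q ℓ r) →
      bs.flatten = bs'.flatten → bs = bs') ∧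
    (∀ n : ℕ, 1 ≤ n →
      (C q ℓ r n).ncard =
        (q - 1) * ∑ p ∈ (Finset.Icc 1 ℓ ×ˢ Finset.range n).filter
            (fun p => L ℓ r p.1 p.2 + 1 ≤ n),
          (1 + (C q ℓ r (n - (L ℓ r p.1 p.2 + 1))).ncard)) :=
  stmt11_general q ℓ r hr

end ZeroErrorDup
end
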